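/- arXiv:2105.12575 — 2 statements merged into one kernel-verified Lean document; each statement's English description precedes it below -/
import Mathlib

section
/- Assume v_0 < ... < v_g satisfy the Bresinsky conditions. Then for every 1 ≤ i ≤ g one has v_i = min{γ ∈ Γ : γ > 0, e_i ∣ γ and e_{i-1} ∤ γ}. -/
/-- The Apéry set of `S ⊆ ℕ` (w.r.t. `a₀ = min S`): the minimal element of `S`
in each residue class modulo `a₀` that meets `S`. -/
noncomputable def apery (S : Set ℕ) : Set ℕ :=
  {a | a ∈ S ∧ ∀ b ∈ S, b % sInf S = a % sInf S → a ≤ b}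

/-- `S` is covered by its Apéry set: `Ap(S)` has exactly `min S` elements and
`S = ⋃_{a ∈ Ap(S)} (a + ℕ·min S)`. -/
noncomputable def CoveredByApery (S : Set ℕ) : Prop :=
  (apery S).ncard = sInf S ∧
    S = {x | ∃ a ∈ apery S, ∃ k : ℕ, x = a + k * sInf S}

/-- The sequence `ε_i` computed from `S`:
`ε_0 = min S`, `ε_i = max{gcd(ε_{i-1}, a) : a ∈ Ap(S), ε_{i-1} ∤ a}`. -/
noncomputable def eps (S : Set ℕ) : ℕ → ℕ
  | 0 => sInf S
  | i + 1 => sSup {d | ∃ a ∈ apery S, ¬ eps S i ∣ a ∧ d = Nat.gcd (eps S i) a}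

/-- `η_0 = 1`, `η_i = ε_{i-1}/ε_i`. -/
noncomputable def eta (S : Set ℕ) : ℕ → ℕ
  | 0 => 1
  | i + 1 => eps S i / eps S (i + 1)

/-- The minimal index `ρ` with `ε_ρ = 1`. -/
noncomputable def rho (S : Set ℕ) : ℕ := sInf {i | eps S i = 1}

/-- The set of the `m` smallest elements of `T ⊆ ℕ`. -/
noncomputable def nSmallest (m : ℕ) (T : Set ℕ) : Set ℕ :=
  {a | a ∈ T ∧ (T ∩ Set.Iio a).ncard < m}

/-- The sets `B_i(S)`: `B_0(S) = {min S}`, and for `i ≥ 1`, `B_i(S)` is the set of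
the `ε_0/ε_{i-1}` smallest elements of `{a ∈ Ap(S) : ε_i ∣ a, ε_{i-1} ∤ a}`. -/
noncomputable def Bset (S : Set ℕ) : ℕ → Set ℕ
  | 0 => {sInf S}
  | i + 1 => nSmallest (eps S 0 / eps S i)
      {a | a ∈ apery S ∧ eps S (i + 1) ∣ a ∧ ¬ eps S i ∣ a}

/-- `e_i = gcd(v_0, …, v_i)`. -/
def eseq (v : ℕ → ℕ) : ℕ → ℕ
  | 0 => v 0
  | i + 1 => Nat.gcd (eseq v i) (v (i + 1))

/-- `n_0 = 1`, `n_i = e_{i-1}/e_i`. -/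
def nseq (v : ℕ → ℕ) : ℕ → ℕ
  | 0 => 1
  | i + 1 => eseq v i / eseq v (i + 1)

/-- The numerical semigroup generated by `v_0, …, v_g`. -/
def semigroupGen (g : ℕ) (v : ℕ → ℕ) : Set ℕ :=
  {x | ∃ c : ℕ → ℕ, x = ∑ i ∈ Finset.range (g + 1), c i * v i}

lemma eseq_pos (v : ℕ → ℕ) (h : 0 < v 0) : ∀ k, 0 < eseq v k
  | 0 => h
  | k + 1 => Nat.gcd_pos_of_pos_left _ (eseq_pos v h k)

lemma eseq_dvd_eseq (v : ℕ → ℕ) : ∀ j k, j ≤ k → eseq v k ∣ eseq v j := by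
  intro j k hjk
  induction k with
  | zero => simp [Nat.le_zero.mp hjk]
  | succ n ih =>
    rcases Nat.lt_or_ge j (n + 1) with h | h
    · exact dvd_trans (Nat.gcd_dvd_left _ _) (ih (Nat.lt_succ_iff.mp h))
    · have : j = n + 1 := le_antisymm hjk h
      simp [this]

lemma eseq_dvd_v (v : ℕ → ℕ) (j k : ℕ) (hjk : j ≤ k) : eseq v k ∣ v j := by
  have h := eseq_dvd_eseq v j k hjk
  cases j with
  | zero => simpa [eseq] using h
  | succ m => exact dvd_trans h (dvd_trans (Nat.gcd_dvd_right _ _) (dvd_refl _))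

/-- For `v_0 < ⋯ < v_g` positive with `gcd = 1` satisfying the Bresinsky
conditions: for every `1 ≤ i ≤ g`,
`v_i = min{γ ∈ Γ : γ > 0, e_i ∣ γ, e_{i-1} ∤ γ}`. -/
theorem vi_eq_min (g : ℕ) (v : ℕ → ℕ) (hpos : 0 < v 0)
    (hmono : ∀ i j, i < j → j ≤ g → v i < v j) (hgcd : eseq v g = 1)
    (hbre : ∀ i, 1 ≤ i → i ≤ g → 2 ≤ nseq v i ∧ nseq v (i - 1) * v (i - 1) < v i) :
    ∀ i, 1 ≤ i → i ≤ g →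
      v i = sInf {γ | γ ∈ semigroupGen g v ∧ 0 < γ ∧
        eseq v i ∣ γ ∧ ¬ eseq v (i - 1) ∣ γ} := by

  intro i hi1 hig
  obtain ⟨k, rfl⟩ : ∃ k, i = k + 1 := ⟨i - 1, (Nat.succ_pred_eq_of_pos hi1).symm⟩
  simp only [Nat.add_sub_cancel]
  set T := {γ | γ ∈ semigroupGen g v ∧ 0 < γ ∧ eseq v (k + 1) ∣ γ ∧ ¬ eseq v k ∣ γ} with hT
  have hvpos : 0 < v (k + 1) := lt_trans hpos (hmono 0 (k + 1) (Nat.succ_pos k) hig)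
  have hepos : 0 < eseq v (k + 1) := eseq_pos v hpos (k + 1)
  have hmem : v (k + 1) ∈ T := by
    refine ⟨⟨fun j => if j = k + 1 then 1 else 0, ?_⟩, hvpos, ?_, ?_⟩
    · rw [Finset.sum_eq_single (k + 1)]
      · simp
      · intro b _ hb; simp [hb]
      · intro h; exact absurd (Finset.mem_range.mpr (Nat.lt_succ_of_le hig)) h
    · exact Nat.gcd_dvd_right _ _
    · intro hdvd
      have heq : eseq v (k + 1) = eseq v k := by
        show Nat.gcd (eseq v k) (v (k + 1)) = eseq v k
        exact Nat.gcd_eq_left hdvd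
      have h2 := (hbre (k + 1) (Nat.succ_pos k) hig).1
      have : nseq v (k + 1) = 1 := by
        show eseq v k / eseq v (k + 1) = 1
        rw [heq]
        exact Nat.div_self (heq ▸ hepos)
      omega
  have hlb : ∀ γ ∈ T, v (k + 1) ≤ γ := by
    rintro γ ⟨⟨c, rfl⟩, hγpos, _, hnd⟩
    by_contra hlt
    push_neg at hlt
    have hzero : ∀ j ∈ Finset.range (g + 1), k + 1 ≤ j → c j = 0 := by
      intro j hj hkj
      by_contra hc
      have hcj : 1 ≤ c j := Nat.one_le_iff_ne_zero.mpr hc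
      have h1 : v (k + 1) ≤ v j := by
        rcases Nat.eq_or_lt_of_le hkj with h | h
        · rw [h]
        · exact le_of_lt (hmono (k + 1) j h (Nat.lt_succ_iff.mp (Finset.mem_range.mp hj)))
      have h2 : v j ≤ c j * v j := Nat.le_mul_of_pos_left _ hcj
      have h3 : c j * v j ≤ ∑ i ∈ Finset.range (g + 1), c i * v i :=
        Finset.single_le_sum (f := fun i => c i * v i) (fun i _ => Nat.zero_le _) hj
      omega
    apply hnd
    apply Finset.dvd_sum
    intro j hj
    rcases Nat.lt_or_ge j (k + 1) with h | h
    · exact Dvd.dvd.mul_left (eseq_dvd_v v j k (Nat.lt_succ_iff.mp h)) _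
    · rw [hzero j hj h]; simp
  refine le_antisymm ?_ (Nat.sInf_le hmem)
  exact hlb _ (Nat.sInf_mem ⟨_, hmem⟩)
end

section
/- The value set of 1-forms does not determine the value semigroup for plane curves with two branches: for b ∈ ℂ* let D_{b} be the plane curve with branches parametrized by φ₁(t₁) = (t₁², t₁³ + t₁⁴) and φ₂(t₂) = (t₂², b·t₂³). Then for every b ∈ ℂ*, Λ_{D_b} = {(2,2),(3,3),(4,4),(5,5)} ∪ ((6,6)+ℕ²); whereas Γ_{D_b} = {(0,0)} ∪ {(a,a) : 2 ≤ a ≤ 7} ∪ {(6,6+k) : k ∈ ℕ} ∪ {(6+k,6) : k ∈ ℕ} ∪ ((8,8)+ℕ²) when b² ≠ 1, and Γ_{D_b} = {(0,0)} ∪ {(a,a) : 2 ≤ a ≤ 8} ∪ {(7,7+k) : k ∈ ℕ} ∪ {(7+k,7) : k ∈ ℕ} ∪ ((9,9)+ℕ²) when b² = 1; in particular there exist b, b' ∈ ℂ* with Λ_{D_b} = Λ_{D_{b'}} but Γ_{D_b} ≠ Γ_{D_{b'}}. -/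
open PowerSeries

/-- Substitution of two power series (with zero constant term) into a
two-variable power series: `h(a, b)`. -/
noncomputable def subst2 (a b : PowerSeries ℂ) (h : MvPowerSeries (Fin 2) ℂ) :
    PowerSeries ℂ :=
  PowerSeries.mk fun k =>
    ∑ i ∈ Finset.range (k + 1), ∑ j ∈ Finset.range (k + 1),
      MvPowerSeries.coeff (Finsupp.single 0 i + Finsupp.single 1 j) h *
        PowerSeries.coeff k (a ^ i * b ^ j)

/-- Formal derivative with respect to `t`. -/
noncomputable def dt (f : PowerSeries ℂ) : PowerSeries ℂ :=
  PowerSeries.mk fun k => (k + 1 : ℂ) * PowerSeries.coeff (k + 1) f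

/-- The value semigroup of a plane curve with two branches, parametrized by
`φ₁ = (x₁, y₁)` and `φ₂ = (x₂, y₂)`: the set of pairs
`(ord_{t₁} φ₁*(h), ord_{t₂} φ₂*(h))` with `φ₁*(h) ≠ 0 ≠ φ₂*(h)`. -/
noncomputable def gammaTwo (x₁ y₁ x₂ y₂ : PowerSeries ℂ) : Set (ℕ × ℕ) :=
  {d | ∃ h : MvPowerSeries (Fin 2) ℂ, subst2 x₁ y₁ h ≠ 0 ∧ subst2 x₂ y₂ h ≠ 0 ∧
    (subst2 x₁ y₁ h).order = (d.1 : ℕ∞) ∧ (subst2 x₂ y₂ h).order = (d.2 : ℕ∞)}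

/-- The value set of 1-forms of a plane curve with two branches: the set of
pairs `(ord_{t₁}(t₁·φ₁*(ω)), ord_{t₂}(t₂·φ₂*(ω)))` with `φᵢ*(ω) ≠ 0`. -/
noncomputable def lambdaTwo (x₁ y₁ x₂ y₂ : PowerSeries ℂ) : Set (ℕ × ℕ) :=
  {d | ∃ A B : MvPowerSeries (Fin 2) ℂ,
    subst2 x₁ y₁ A * dt x₁ + subst2 x₁ y₁ B * dt y₁ ≠ 0 ∧
    subst2 x₂ y₂ A * dt x₂ + subst2 x₂ y₂ B * dt y₂ ≠ 0 ∧
    (PowerSeries.X * (subst2 x₁ y₁ A * dt x₁ + subst2 x₁ y₁ B * dt y₁)).order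
      = (d.1 : ℕ∞) ∧
    (PowerSeries.X * (subst2 x₂ y₂ A * dt x₂ + subst2 x₂ y₂ B * dt y₂)).order
      = (d.2 : ℕ∞)}

local notation "𝕩" => (MvPowerSeries.X 0 : MvPowerSeries (Fin 2) ℂ)
local notation "𝕪" => (MvPowerSeries.X 1 : MvPowerSeries (Fin 2) ℂ)

/-!
Let `f₁ = y² - x³ - 2x²y + x⁴` and `f₂ = y² - b²x³` be the equations of the branches. On both
branches `x` and `y` have orders `2` and `3`, so `xⁱyʲ` has value `(2i + 3j, 2i + 3j)`, while
`f₂(φ₁) = (1 - b²)t⁶ + 2t⁷ + t⁸` and `f₁(φ₂) = (b² - 1)t⁶ - 2bt⁷ + t⁸` have order `c = 6`, or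
`c = 7` when `b² = 1`. Monomials, `f₂` or `f₁` plus a monomial of larger value, and `m f₂ + m' f₁`
for monomials `m, m'` realize every claimed element of `Γ`. Conversely, in each degree `< c` and in
degree `c + 1` the coefficients of `h(φ₁)` and `h(φ₂)` vanish together once all lower ones do,
which leaves no other value.

For `Λ`, `xⁱ dx` and `xⁱ dy` give the diagonal values; `3y dx - 2x dy` vanishes on `φ₂` and
`3y dx - 2x dy + x² dx` on `φ₁`, each with value `6` on the other branch, and their monomial
multiples, together with `d f₂` and `d f₁` for the value `7`, fill `(6, 6) + ℕ²`. Conversely, the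
coefficients of `φ₁*ω` and `φ₂*ω` up to degree `4` vanish together, whatever `b` is.
-/

section Substitution

variable {a b : ℂ⟦X⟧}

noncomputable def coeffXY (h : MvPowerSeries (Fin 2) ℂ) (i j : ℕ) : ℂ :=
  MvPowerSeries.coeff (Finsupp.single 0 i + Finsupp.single 1 j) h

theorem subst2_add (f g : MvPowerSeries (Fin 2) ℂ) :
    subst2 a b (f + g) = subst2 a b f + subst2 a b g := by
  ext k
  simp [subst2, add_mul, Finset.sum_add_distrib]

theorem coeff_pow_mul_pow_eq_zero (ha : constantCoeff a = 0) (hb : constantCoeff b = 0)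
    {i j k : ℕ} (hk : k < i + j) : coeff k (a ^ i * b ^ j) = 0 := by
  have hX : (X : ℂ⟦X⟧) ^ (i + j) ∣ a ^ i * b ^ j := by
    rw [pow_add]
    exact mul_dvd_mul (pow_dvd_pow_of_dvd (X_dvd_iff.mpr ha) i)
      (pow_dvd_pow_of_dvd (X_dvd_iff.mpr hb) j)
  exact X_pow_dvd_iff.mp hX k hk

theorem hasSubst_pair (ha : constantCoeff a = 0) (hb : constantCoeff b = 0) :
    MvPowerSeries.HasSubst ![a, b] :=
  MvPowerSeries.hasSubst_of_constantCoeff_zero fun s => by fin_cases s <;> assumption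

noncomputable def subst2Hom (ha : constantCoeff a = 0) (hb : constantCoeff b = 0) :
    MvPowerSeries (Fin 2) ℂ →ₐ[ℂ] ℂ⟦X⟧ :=
  MvPowerSeries.substAlgHom (hasSubst_pair ha hb)

@[simp]
theorem subst2Hom_X_zero (ha : constantCoeff a = 0) (hb : constantCoeff b = 0) :
    subst2Hom ha hb 𝕩 = a :=
  MvPowerSeries.substAlgHom_X _ 0

@[simp]
theorem subst2Hom_X_one (ha : constantCoeff a = 0) (hb : constantCoeff b = 0) :
    subst2Hom ha hb 𝕪 = b :=
  MvPowerSeries.substAlgHom_X _ 1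

/-- The truncation to `i, j ≤ k` in the definition of `subst2` loses nothing because
`X ^ (i + j)` divides `a ^ i * b ^ j`. -/
theorem subst2_eq_subst2Hom (ha : constantCoeff a = 0) (hb : constantCoeff b = 0)
    (h : MvPowerSeries (Fin 2) ℂ) : subst2 a b h = subst2Hom ha hb h := by
  ext k
  rw [subst2, coeff_mk, subst2Hom, MvPowerSeries.substAlgHom_apply, PowerSeries.coeff,
    MvPowerSeries.coeff_subst (hasSubst_pair ha hb)]
  set g : ℕ × ℕ → Fin 2 →₀ ℕ := fun p => Finsupp.single 0 p.1 + Finsupp.single 1 p.2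
  have hg : Function.Injective g := fun p q hpq => by
    have h0 := DFunLike.congr_fun hpq 0
    have h1 := DFunLike.congr_fun hpq 1
    simp only [g, Finsupp.add_apply, Finsupp.single_apply] at h0 h1
    exact Prod.ext (by simpa using h0) (by simpa using h1)
  rw [finsum_eq_sum_of_support_subset _
    (s := (Finset.range (k + 1) ×ˢ Finset.range (k + 1)).image g)]
  · rw [Finset.sum_image fun p _ q _ hpq => hg hpq, Finset.sum_product]
    refine Finset.sum_congr rfl fun i _ => Finset.sum_congr rfl fun j _ => ?_
    simp [g, PowerSeries.coeff]
  · intro d hd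
    have hdg : d = g (d 0, d 1) := by ext s; fin_cases s <;> simp [g]
    rw [Function.mem_support, hdg] at hd
    simp only [Finset.coe_image, Finset.coe_product, Finset.coe_range, Set.mem_image]
    refine ⟨(d 0, d 1), ?_, hdg.symm⟩
    by_contra hk
    simp only [Set.mem_prod, Set.mem_Iio, not_and_or, not_lt] at hk
    have hzero := coeff_pow_mul_pow_eq_zero ha hb (i := d 0) (j := d 1) (k := k) (by omega)
    simp only [PowerSeries.coeff] at hzero
    exact hd (by simp [g, hzero])

theorem subst2_mul (ha : constantCoeff a = 0) (hb : constantCoeff b = 0)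
    (f g : MvPowerSeries (Fin 2) ℂ) : subst2 a b (f * g) = subst2 a b f * subst2 a b g := by
  simp only [subst2_eq_subst2Hom ha hb, map_mul]

theorem subst2_monomial (ha : constantCoeff a = 0) (hb : constantCoeff b = 0) (i j : ℕ) :
    subst2 a b (𝕩 ^ i * 𝕪 ^ j) = a ^ i * b ^ j := by
  simp [subst2_eq_subst2Hom ha hb]

theorem dt_eq_derivative (f : ℂ⟦X⟧) : dt f = d⁄dX ℂ f := by
  ext k
  simp [dt, coeff_derivative, mul_comm]

end Substitution

section Order

variable {R : Type*} [Semiring R] {u v : R⟦X⟧}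

theorem order_X_pow_mul_of_constantCoeff_ne_zero (hu : constantCoeff u ≠ 0) (n : ℕ) :
    (X ^ n * u).order = (n : ℕ∞) :=
  order_eq_nat.mpr ⟨by simpa [coeff_X_pow_mul', coeff_zero_eq_constantCoeff] using hu,
    fun i hi => by simp [coeff_X_pow_mul', hi.not_ge]⟩

theorem order_add_of_order_lt (h : u.order < v.order) : (u + v).order = u.order := by
  rw [order_add_of_order_ne _ _ h.ne, min_eq_left h.le]

theorem ne_zero_of_order_eq_coe {n : ℕ} (hu : u.order = n) : u ≠ 0 := by
  rintro rfl
  simp at hu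

theorem constantCoeff_eq_zero_of_order_eq {n : ℕ} (hu : u.order = n) (hn : n ≠ 0) :
    constantCoeff u = 0 :=
  order_ne_zero_iff_constCoeff_eq_zero.mp (by rw [hu]; exact_mod_cast hn)

theorem coeff_eq_zero_iff_lt_of_order_eq {d m : ℕ} (hu : u.order = d) (hm : m ≤ d) :
    coeff m u = 0 ↔ m < d := by
  refine ⟨fun hc => hm.lt_of_ne fun hmd => ?_, fun hmd => coeff_of_lt_order m ?_⟩
  · exact (order_eq_nat.mp (hmd ▸ hu)).1 hc
  · rw [hu]; exact_mod_cast hmd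

theorem order_C_mul_X_pow {c : R} (hc : c ≠ 0) (n : ℕ) : (C c * X ^ n : R⟦X⟧).order = n := by
  rw [← monomial_eq_C_mul_X_pow, order_monomial_of_ne_zero n c hc]

def SyncAt (u v : R⟦X⟧) (m : ℕ) : Prop :=
  (∀ k < m, coeff k u = 0 ∧ coeff k v = 0) → (coeff m u = 0 ↔ coeff m v = 0)

theorem order_eq_or_le_of_syncAt {d₁ d₂ N : ℕ} (hu : u.order = d₁) (hv : v.order = d₂)
    (hsync : ∀ m < N, SyncAt u v m) : (d₁ = d₂ ∧ d₁ < N) ∨ (N ≤ d₁ ∧ N ≤ d₂) := by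
  induction N with
  | zero => simp
  | succ N ih =>
    rcases ih fun m hm => hsync m (by omega) with hlt | ⟨h₁, h₂⟩
    · omega
    have hlow : ∀ k < N, coeff k u = 0 ∧ coeff k v = 0 := fun k hk =>
      ⟨(coeff_eq_zero_iff_lt_of_order_eq hu (by omega)).mpr (by omega),
        (coeff_eq_zero_iff_lt_of_order_eq hv (by omega)).mpr (by omega)⟩
    have := hsync N (by omega) hlow
    rw [coeff_eq_zero_iff_lt_of_order_eq hu h₁, coeff_eq_zero_iff_lt_of_order_eq hv h₂] at this
    omega

end Order

theorem order_X_pow_add_X_pow_succ {R : Type*} [CommSemiring R] [Nontrivial R] (n : ℕ) :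
    (X ^ n + X ^ (n + 1) : R⟦X⟧).order = n := by
  rw [show (X ^ n + X ^ (n + 1) : R⟦X⟧) = X ^ n * (1 + X) by ring]
  exact order_X_pow_mul_of_constantCoeff_ne_zero (by simp) n

section ValueSets

variable {x₁ y₁ x₂ y₂ : ℂ⟦X⟧}

theorem mem_gammaTwo_of_order {h : MvPowerSeries (Fin 2) ℂ} {n m : ℕ}
    (h₁ : (subst2 x₁ y₁ h).order = n) (h₂ : (subst2 x₂ y₂ h).order = m) :
    (n, m) ∈ gammaTwo x₁ y₁ x₂ y₂ :=
  ⟨h, ne_zero_of_order_eq_coe h₁, ne_zero_of_order_eq_coe h₂, h₁, h₂⟩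

theorem mem_gammaTwo_of_add {h h' : MvPowerSeries (Fin 2) ℂ} {n m : ℕ}
    (h₁ : (subst2 x₁ y₁ h).order = n) (h₁' : n < (subst2 x₁ y₁ h').order)
    (h₂ : (subst2 x₂ y₂ h').order = m) (h₂' : m < (subst2 x₂ y₂ h).order) :
    (n, m) ∈ gammaTwo x₁ y₁ x₂ y₂ := by
  refine mem_gammaTwo_of_order (h := h + h') ?_ ?_
  · rw [subst2_add, order_add_of_order_lt (h₁ ▸ h₁'), h₁]
  · rw [subst2_add, add_comm, order_add_of_order_lt (h₂ ▸ h₂'), h₂]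

/-- The pullback `φ^* ω` of `ω = A dx + B dy`, encoded as `(A, B)`, along `φ = (x, y)`. -/
noncomputable def pullback (x y : ℂ⟦X⟧) (ω : MvPowerSeries (Fin 2) ℂ × MvPowerSeries (Fin 2) ℂ) :
    ℂ⟦X⟧ :=
  subst2 x y ω.1 * dt x + subst2 x y ω.2 * dt y

theorem pullback_add (x y : ℂ⟦X⟧) (ω ω' : MvPowerSeries (Fin 2) ℂ × MvPowerSeries (Fin 2) ℂ) :
    pullback x y (ω + ω') = pullback x y ω + pullback x y ω' := by
  simp only [pullback, Prod.fst_add, Prod.snd_add, subst2_add]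
  ring

theorem pullback_smul {x y : ℂ⟦X⟧} (hx : constantCoeff x = 0) (hy : constantCoeff y = 0)
    (g : MvPowerSeries (Fin 2) ℂ) (ω : MvPowerSeries (Fin 2) ℂ × MvPowerSeries (Fin 2) ℂ) :
    pullback x y (g • ω) = subst2 x y g * pullback x y ω := by
  simp only [pullback, Prod.smul_fst, Prod.smul_snd, smul_eq_mul, subst2_mul hx hy]
  ring

theorem mem_lambdaTwo_of_order {ω : MvPowerSeries (Fin 2) ℂ × MvPowerSeries (Fin 2) ℂ}
    {n m : ℕ} (h₁ : (pullback x₁ y₁ ω).order = n) (h₂ : (pullback x₂ y₂ ω).order = m) :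
    (n + 1, m + 1) ∈ lambdaTwo x₁ y₁ x₂ y₂ := by
  refine ⟨ω.1, ω.2, ne_zero_of_order_eq_coe h₁, ne_zero_of_order_eq_coe h₂, ?_, ?_⟩
  · rw [order_mul, order_X, ← pullback, h₁]; push_cast; ring
  · rw [order_mul, order_X, ← pullback, h₂]; push_cast; ring

theorem mem_lambdaTwo_of_add {ω ω' : MvPowerSeries (Fin 2) ℂ × MvPowerSeries (Fin 2) ℂ}
    {n m : ℕ} (h₁ : (pullback x₁ y₁ ω).order = n) (h₁' : n < (pullback x₁ y₁ ω').order)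
    (h₂ : (pullback x₂ y₂ ω').order = m) (h₂' : m < (pullback x₂ y₂ ω).order) :
    (n + 1, m + 1) ∈ lambdaTwo x₁ y₁ x₂ y₂ := by
  refine mem_lambdaTwo_of_order (ω := ω + ω') ?_ ?_
  · rw [pullback_add, order_add_of_order_lt (h₁ ▸ h₁'), h₁]
  · rw [pullback_add, add_comm, order_add_of_order_lt (h₂ ▸ h₂'), h₂]

theorem exists_pullback_order_of_mem_lambdaTwo {d : ℕ × ℕ} (hd : d ∈ lambdaTwo x₁ y₁ x₂ y₂) :
    ∃ ω : MvPowerSeries (Fin 2) ℂ × MvPowerSeries (Fin 2) ℂ, ∃ e₁ e₂ : ℕ,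
      (pullback x₁ y₁ ω).order = e₁ ∧ (pullback x₂ y₂ ω).order = e₂ ∧ d = (e₁ + 1, e₂ + 1) := by
  obtain ⟨A, B, h₁, h₂, hd₁, hd₂⟩ := hd
  obtain ⟨e₁, he₁⟩ := ENat.ne_top_iff_exists.mp (order_eq_top.not.mpr h₁)
  obtain ⟨e₂, he₂⟩ := ENat.ne_top_iff_exists.mp (order_eq_top.not.mpr h₂)
  refine ⟨(A, B), e₁, e₂, he₁.symm, he₂.symm, ?_⟩
  rw [order_mul, order_X, ← he₁] at hd₁
  rw [order_mul, order_X, ← he₂] at hd₂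
  norm_cast at hd₁ hd₂
  exact Prod.ext (by omega) (by omega)

/-- The value semigroup claimed for `D_b`, with `c` the intersection multiplicity of its
branches. -/
def gammaSet (c : ℕ) : Set (ℕ × ℕ) :=
  {p | p = (0, 0) ∨ (∃ a : ℕ, 2 ≤ a ∧ a ≤ c + 1 ∧ p = (a, a)) ∨
    (∃ k : ℕ, p = (c, c + k)) ∨ (∃ k : ℕ, p = (c + k, c)) ∨
    ∃ k l : ℕ, p = (c + 2 + k, c + 2 + l)}

theorem mem_gammaSet_iff {c d₁ d₂ : ℕ} :
    (d₁, d₂) ∈ gammaSet c ↔ (d₁ = d₂ ∧ d₁ ≠ 1 ∧ d₁ ≤ c + 1) ∨ (d₁ = c ∧ c ≤ d₂) ∨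
      (d₂ = c ∧ c ≤ d₁) ∨ (c + 2 ≤ d₁ ∧ c + 2 ≤ d₂) := by
  simp only [gammaSet, Set.mem_ofPred_eq, Prod.mk.injEq]
  constructor
  · rintro (h | ⟨a, h₂, h₃, rfl, rfl⟩ | ⟨k, rfl, rfl⟩ | ⟨k, rfl, rfl⟩ | ⟨k, l, rfl, rfl⟩) <;> omega
  · rintro (⟨rfl, h1, h⟩ | ⟨rfl, h⟩ | ⟨rfl, h⟩ | ⟨h₁, h₂⟩)
    · rcases Nat.lt_or_ge d₁ 2 with h0 | h2
      · left; omega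
      · exact Or.inr (Or.inl ⟨d₁, h2, h, rfl, rfl⟩)
    · exact Or.inr (Or.inr (Or.inl ⟨d₂ - d₁, rfl, by omega⟩))
    · exact Or.inr (Or.inr (Or.inr (Or.inl ⟨d₁ - d₂, by omega, rfl⟩)))
    · exact Or.inr (Or.inr (Or.inr (Or.inr ⟨d₁ - (c + 2), d₂ - (c + 2), by omega, by omega⟩)))

theorem mem_gammaSet_of_syncAt {u v : ℂ⟦X⟧} {c d₁ d₂ : ℕ} (hu : u.order = d₁)
    (hv : v.order = d₂) (h1 : coeff 1 u = 0) (hsync : ∀ m < c, SyncAt u v m)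
    (hnext : SyncAt u v (c + 1)) : (d₁, d₂) ∈ gammaSet c := by
  rw [mem_gammaSet_iff]
  have hd₁ : d₁ ≠ 1 := by rintro rfl; exact (order_eq_nat.mp hu).1 h1
  rcases order_eq_or_le_of_syncAt hu hv hsync with ⟨rfl, hlt⟩ | ⟨h₁, h₂⟩
  · omega
  by_cases hc : d₁ = c ∨ d₂ = c
  · omega
  have hlow : ∀ k < c + 1, coeff k u = 0 ∧ coeff k v = 0 := fun k hk =>
    ⟨(coeff_eq_zero_iff_lt_of_order_eq hu (by omega)).mpr (by omega),
      (coeff_eq_zero_iff_lt_of_order_eq hv (by omega)).mpr (by omega)⟩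
  have := hnext hlow
  rw [coeff_eq_zero_iff_lt_of_order_eq (m := c + 1) hu (by omega),
    coeff_eq_zero_iff_lt_of_order_eq (m := c + 1) hv (by omega)] at this
  omega

end ValueSets

section Cusps

theorem exists_two_mul_add_three_mul {w : ℕ} (hw : w ≠ 1) : ∃ i j, 2 * i + 3 * j = w := by
  rcases Nat.even_or_odd' w with ⟨i, rfl | rfl⟩
  · exact ⟨i, 0, by ring⟩
  · exact ⟨i - 1, 1, by omega⟩

variable {x y : ℂ⟦X⟧}

theorem order_subst2_monomial (hx : x.order = 2) (hy : y.order = 3) (i j : ℕ) :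
    (subst2 x y (𝕩 ^ i * 𝕪 ^ j)).order = (2 * i + 3 * j : ℕ) := by
  rw [subst2_monomial (constantCoeff_eq_zero_of_order_eq (n := 2) hx two_ne_zero)
    (constantCoeff_eq_zero_of_order_eq (n := 3) hy three_ne_zero), order_mul, order_pow,
    order_pow, hx, hy]
  push_cast
  ring

theorem order_subst2_monomial_mul (hx : x.order = 2) (hy : y.order = 3) (i j : ℕ)
    (f : MvPowerSeries (Fin 2) ℂ) :
    (subst2 x y (𝕩 ^ i * 𝕪 ^ j * f)).order = (2 * i + 3 * j : ℕ) + (subst2 x y f).order := by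
  rw [subst2_mul (constantCoeff_eq_zero_of_order_eq (n := 2) hx two_ne_zero)
    (constantCoeff_eq_zero_of_order_eq (n := 3) hy three_ne_zero), order_mul,
    order_subst2_monomial hx hy]

variable {x₁ y₁ x₂ y₂ : ℂ⟦X⟧}

theorem gammaSet_subset_gammaTwo (hx₁ : x₁.order = 2) (hy₁ : y₁.order = 3)
    (hx₂ : x₂.order = 2) (hy₂ : y₂.order = 3) {f₁ f₂ : MvPowerSeries (Fin 2) ℂ} {c : ℕ}
    (hc : 2 ≤ c) (hf₁ : subst2 x₁ y₁ f₁ = 0) (hf₂ : subst2 x₂ y₂ f₂ = 0)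
    (hf₂₁ : (subst2 x₁ y₁ f₂).order = c) (hf₁₂ : (subst2 x₂ y₂ f₁).order = c) :
    gammaSet c ⊆ gammaTwo x₁ y₁ x₂ y₂ := by
  have diag (w : ℕ) (hw : w ≠ 1) : (w, w) ∈ gammaTwo x₁ y₁ x₂ y₂ := by
    obtain ⟨i, j, rfl⟩ := exists_two_mul_add_three_mul hw
    exact mem_gammaTwo_of_order (order_subst2_monomial hx₁ hy₁ i j)
      (order_subst2_monomial hx₂ hy₂ i j)
  rintro ⟨d₁, d₂⟩ hd
  rcases mem_gammaSet_iff.mp hd with ⟨rfl, hd₁, -⟩ | ⟨rfl, hd₂⟩ | ⟨rfl, hd₁⟩ | ⟨hd₁, hd₂⟩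
  · exact diag d₁ hd₁
  · rcases hd₂.eq_or_lt with rfl | hlt
    · exact diag d₁ (by omega)
    obtain ⟨i, j, hij⟩ := exists_two_mul_add_three_mul (w := d₂) (by omega)
    refine mem_gammaTwo_of_add (h' := 𝕩 ^ i * 𝕪 ^ j) hf₂₁ ?_
      (by rw [order_subst2_monomial hx₂ hy₂, hij]) (by simp [hf₂])
    rw [order_subst2_monomial hx₁ hy₁, hij]
    exact_mod_cast hlt
  · rcases hd₁.eq_or_lt with rfl | hlt
    · exact diag d₂ (by omega)
    obtain ⟨i, j, hij⟩ := exists_two_mul_add_three_mul (w := d₁) (by omega)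
    refine mem_gammaTwo_of_add (h := 𝕩 ^ i * 𝕪 ^ j) (by rw [order_subst2_monomial hx₁ hy₁, hij])
      (by simp [hf₁]) hf₁₂ ?_
    rw [order_subst2_monomial hx₂ hy₂, hij]
    exact_mod_cast hlt
  · obtain ⟨i, j, hij⟩ := exists_two_mul_add_three_mul (w := d₁ - c) (by omega)
    obtain ⟨i', j', hij'⟩ := exists_two_mul_add_three_mul (w := d₂ - c) (by omega)
    refine mem_gammaTwo_of_add (h := 𝕩 ^ i * 𝕪 ^ j * f₂) (h' := 𝕩 ^ i' * 𝕪 ^ j' * f₁)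
      ?_ ?_ ?_ ?_
    · rw [order_subst2_monomial_mul hx₁ hy₁, hf₂₁, hij, ← Nat.cast_add,
        Nat.sub_add_cancel (by omega)]
    · simp [order_subst2_monomial_mul hx₁ hy₁, hf₁]
    · rw [order_subst2_monomial_mul hx₂ hy₂, hf₁₂, hij', ← Nat.cast_add,
        Nat.sub_add_cancel (by omega)]
    · simp [order_subst2_monomial_mul hx₂ hy₂, hf₂]

end Cusps

namespace CurveD

theorem coeff_subst2_branch₁ (h : MvPowerSeries (Fin 2) ℂ) {k : ℕ} (hk : k ≤ 8) :
    coeff k (subst2 (X ^ 2) (X ^ 3 + X ^ 4) h) =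
      [coeffXY h 0 0, 0, coeffXY h 1 0, coeffXY h 0 1, coeffXY h 2 0 + coeffXY h 0 1,
        coeffXY h 1 1, coeffXY h 3 0 + coeffXY h 1 1 + coeffXY h 0 2,
        coeffXY h 2 1 + 2 * coeffXY h 0 2,
        coeffXY h 4 0 + coeffXY h 2 1 + coeffXY h 0 2 + coeffXY h 1 2].getD k 0 := by
  have hpow (i j : ℕ) : ((X : ℂ⟦X⟧) ^ 2) ^ i * (X ^ 3 + X ^ 4) ^ j =
      X ^ (2 * i + 3 * j) * (((1 + Polynomial.X) ^ j : Polynomial ℂ) : ℂ⟦X⟧) := by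
    rw [show (X : ℂ⟦X⟧) ^ 3 + X ^ 4 = X ^ 3 * (1 + X) by ring, mul_pow]
    push_cast; ring
  simp only [subst2, coeff_mk, hpow, coeff_X_pow_mul', Polynomial.coeff_coe,
    Polynomial.coeff_one_add_X_pow]
  interval_cases k <;> simp [Finset.sum_range_succ, coeffXY, Nat.choose] <;> ring

theorem coeff_subst2_branch₂ (b : ℂ) (h : MvPowerSeries (Fin 2) ℂ) {k : ℕ} (hk : k ≤ 8) :
    coeff k (subst2 (X ^ 2) (C b * X ^ 3) h) =
      [coeffXY h 0 0, 0, coeffXY h 1 0, b * coeffXY h 0 1, coeffXY h 2 0, b * coeffXY h 1 1,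
        coeffXY h 3 0 + b ^ 2 * coeffXY h 0 2, b * coeffXY h 2 1,
        coeffXY h 4 0 + b ^ 2 * coeffXY h 1 2].getD k 0 := by
  have hpow (i j : ℕ) : ((X : ℂ⟦X⟧) ^ 2) ^ i * (C b * X ^ 3) ^ j =
      C (b ^ j) * X ^ (2 * i + 3 * j) := by
    rw [map_pow]; ring
  simp only [subst2, coeff_mk, hpow, coeff_C_mul_X_pow]
  interval_cases k <;> simp [Finset.sum_range_succ, coeffXY] <;> ring

variable {b : ℂ}

theorem subst2_branch₁_eq (h : MvPowerSeries (Fin 2) ℂ) :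
    subst2 (X ^ 2) (X ^ 3 + X ^ 4) h =
      subst2Hom (a := X ^ 2) (b := X ^ 3 + X ^ 4) (by simp) (by simp) h :=
  subst2_eq_subst2Hom _ _ h

theorem subst2_branch₂_eq (h : MvPowerSeries (Fin 2) ℂ) :
    subst2 (X ^ 2) (C b * X ^ 3) h =
      subst2Hom (a := X ^ 2) (b := C b * X ^ 3) (by simp) (by simp) h :=
  subst2_eq_subst2Hom _ _ h

noncomputable def branchEquation₁ : MvPowerSeries (Fin 2) ℂ :=
  𝕪 ^ 2 - 𝕩 ^ 3 - 2 * 𝕩 ^ 2 * 𝕪 + 𝕩 ^ 4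

noncomputable def branchEquation₂ (b : ℂ) : MvPowerSeries (Fin 2) ℂ :=
  𝕪 ^ 2 - b ^ 2 • 𝕩 ^ 3

theorem subst2_branchEquation₁ : subst2 (X ^ 2) (X ^ 3 + X ^ 4) branchEquation₁ = 0 := by
  simp only [branchEquation₁, subst2_branch₁_eq, map_add, map_sub, map_pow, subst2Hom_X_one,
    subst2Hom_X_zero, map_mul, map_ofNat]
  ring

theorem subst2_branchEquation₂ : subst2 (X ^ 2) (C b * X ^ 3) (branchEquation₂ b) = 0 := by
  simp only [branchEquation₂, subst2_branch₂_eq, map_sub, map_pow, subst2Hom_X_one, map_smul,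
    subst2Hom_X_zero, smul_eq_C_mul]
  ring

theorem order_subst2_branchEquation₂ :
    (subst2 (X ^ 2) (X ^ 3 + X ^ 4) (branchEquation₂ b)).order =
      ((if b ^ 2 = 1 then 7 else 6 : ℕ) : ℕ∞) := by
  have e : subst2 (X ^ 2) (X ^ 3 + X ^ 4) (branchEquation₂ b) =
      X ^ 6 * (C (1 - b ^ 2) + 2 * X + X ^ 2) := by
    simp only [branchEquation₂, subst2_branch₁_eq, map_sub, map_pow, subst2Hom_X_one, map_smul,
      subst2Hom_X_zero, smul_eq_C_mul, map_one]
    ring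
  split_ifs with hb2
  · rw [e, hb2, sub_self, map_zero, zero_add,
      show (X : ℂ⟦X⟧) ^ 6 * (2 * X + X ^ 2) = X ^ 7 * (2 + X) by ring]
    exact order_X_pow_mul_of_constantCoeff_ne_zero (by simp [map_ofNat]) 7
  · rw [e]
    exact order_X_pow_mul_of_constantCoeff_ne_zero (by simpa [sub_eq_zero] using Ne.symm hb2) 6

theorem order_subst2_branchEquation₁ (hb : b ≠ 0) :
    (subst2 (X ^ 2) (C b * X ^ 3) branchEquation₁).order =
      ((if b ^ 2 = 1 then 7 else 6 : ℕ) : ℕ∞) := by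
  have e : subst2 (X ^ 2) (C b * X ^ 3) branchEquation₁ =
      X ^ 6 * (C (b ^ 2 - 1) - 2 * C b * X + X ^ 2) := by
    simp only [branchEquation₁, subst2_branch₂_eq, map_add, map_sub, map_pow, subst2Hom_X_one,
      subst2Hom_X_zero, map_mul, map_ofNat, map_one]
    ring
  split_ifs with hb2
  · rw [e, hb2, sub_self, map_zero, zero_sub,
      show (X : ℂ⟦X⟧) ^ 6 * (-(2 * C b * X) + X ^ 2) = X ^ 7 * (-(2 * C b) + X) by ring]
    exact order_X_pow_mul_of_constantCoeff_ne_zero (by simpa [map_ofNat] using hb) 7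
  · rw [e]
    exact order_X_pow_mul_of_constantCoeff_ne_zero (by simpa [sub_eq_zero] using hb2) 6

theorem syncAt_of_lt_six (hb : b ≠ 0) (h : MvPowerSeries (Fin 2) ℂ) {m : ℕ} (hm : m < 6) :
    SyncAt (subst2 (X ^ 2) (X ^ 3 + X ^ 4) h) (subst2 (X ^ 2) (C b * X ^ 3) h) m := by
  intro hlow
  have h01 : m = 4 → coeffXY h 0 1 = 0 := by
    rintro rfl
    simpa [coeff_subst2_branch₁] using (hlow 3 (by norm_num)).1
  interval_cases m <;> simp [coeff_subst2_branch₁, coeff_subst2_branch₂, hb, h01]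

theorem syncAt_seven (hb : b ≠ 0) (hb2 : b ^ 2 ≠ 1) (h : MvPowerSeries (Fin 2) ℂ) :
    SyncAt (subst2 (X ^ 2) (X ^ 3 + X ^ 4) h) (subst2 (X ^ 2) (C b * X ^ 3) h) 7 := by
  intro hlow
  have h11 : coeffXY h 1 1 = 0 := by simpa [coeff_subst2_branch₁] using (hlow 5 (by norm_num)).1
  have h6 : coeffXY h 3 0 + coeffXY h 1 1 + coeffXY h 0 2 = 0 := by
    simpa [coeff_subst2_branch₁] using (hlow 6 (by norm_num)).1
  have h6' : coeffXY h 3 0 + b ^ 2 * coeffXY h 0 2 = 0 := by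
    simpa [coeff_subst2_branch₂] using (hlow 6 (by norm_num)).2
  have h02 : coeffXY h 0 2 = 0 := by
    have : (b ^ 2 - 1) * coeffXY h 0 2 = 0 := by linear_combination h6' - h6 + h11
    exact (mul_eq_zero.mp this).resolve_left (sub_ne_zero.mpr hb2)
  simp [coeff_subst2_branch₁, coeff_subst2_branch₂, h02, hb]

theorem syncAt_six (hb2 : b ^ 2 = 1) (h : MvPowerSeries (Fin 2) ℂ) :
    SyncAt (subst2 (X ^ 2) (X ^ 3 + X ^ 4) h) (subst2 (X ^ 2) (C b * X ^ 3) h) 6 := by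
  intro hlow
  have h11 : coeffXY h 1 1 = 0 := by simpa [coeff_subst2_branch₁] using (hlow 5 (by norm_num)).1
  simp [coeff_subst2_branch₁, coeff_subst2_branch₂, h11, hb2]

theorem syncAt_eight (hb2 : b ^ 2 = 1) (h : MvPowerSeries (Fin 2) ℂ) :
    SyncAt (subst2 (X ^ 2) (X ^ 3 + X ^ 4) h) (subst2 (X ^ 2) (C b * X ^ 3) h) 8 := by
  intro hlow
  have hb : b ≠ 0 := by rintro rfl; simp at hb2
  have h21 : coeffXY h 2 1 = 0 := by
    simpa [coeff_subst2_branch₂, hb] using (hlow 7 (by norm_num)).2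
  have h02 : coeffXY h 0 2 = 0 := by
    simpa [coeff_subst2_branch₁, h21] using (hlow 7 (by norm_num)).1
  simp [coeff_subst2_branch₁, coeff_subst2_branch₂, h21, h02, hb2]

theorem gammaTwo_eq (hb : b ≠ 0) :
    gammaTwo (X ^ 2) (X ^ 3 + X ^ 4) (X ^ 2) (C b * X ^ 3) =
      gammaSet (if b ^ 2 = 1 then 7 else 6) := by
  refine subset_antisymm ?_ (gammaSet_subset_gammaTwo (by simp) (order_X_pow_add_X_pow_succ 3)
    (by simp) (order_C_mul_X_pow hb 3) (by split_ifs <;> norm_num) subst2_branchEquation₁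
    subst2_branchEquation₂ order_subst2_branchEquation₂ (order_subst2_branchEquation₁ hb))
  rintro ⟨d₁, d₂⟩ ⟨h, -, -, hd₁, hd₂⟩
  have h1 : coeff 1 (subst2 (X ^ 2) (X ^ 3 + X ^ 4) h) = 0 := by simp [coeff_subst2_branch₁]
  split_ifs with hb2
  · refine mem_gammaSet_of_syncAt hd₁ hd₂ h1 (fun m hm => ?_) (syncAt_eight hb2 h)
    rcases Nat.lt_succ_iff_lt_or_eq.mp hm with hm | rfl
    · exact syncAt_of_lt_six hb h hm
    · exact syncAt_six hb2 h
  · exact mem_gammaSet_of_syncAt hd₁ hd₂ h1 (fun m hm => syncAt_of_lt_six hb h hm)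
      (syncAt_seven hb hb2 h)

theorem dt_X_sq : dt (X ^ 2 : ℂ⟦X⟧) = C 2 * X := by
  simp [dt_eq_derivative, map_ofNat]

theorem dt_X_pow_add_X_pow : dt (X ^ 3 + X ^ 4 : ℂ⟦X⟧) = C 3 * X ^ 2 + C 4 * X ^ 3 := by
  simp [dt_eq_derivative, map_ofNat]

theorem dt_C_mul_X_pow : dt (C b * X ^ 3) = C (3 * b) * X ^ 2 := by
  simp only [dt_eq_derivative, Derivation.leibniz, Derivation.leibniz_pow, Nat.add_one_sub_one,
    derivative_X, smul_eq_mul, mul_one, nsmul_eq_mul, Nat.cast_ofNat, derivative_C, mul_zero,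
    add_zero, map_mul, map_ofNat]
  ring

theorem coeff_pullback_branch₁ (ω : MvPowerSeries (Fin 2) ℂ × MvPowerSeries (Fin 2) ℂ) {k : ℕ}
    (hk : k ≤ 4) :
    coeff k (pullback (X ^ 2) (X ^ 3 + X ^ 4) ω) =
      [0, 2 * coeffXY ω.1 0 0, 3 * coeffXY ω.2 0 0, 2 * coeffXY ω.1 1 0 + 4 * coeffXY ω.2 0 0,
        2 * coeffXY ω.1 0 1 + 3 * coeffXY ω.2 1 0].getD k 0 := by
  have e : pullback (X ^ 2) (X ^ 3 + X ^ 4) ω =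
      X ^ 1 * (C 2 * subst2 (X ^ 2) (X ^ 3 + X ^ 4) ω.1) +
        X ^ 2 * (C 3 * subst2 (X ^ 2) (X ^ 3 + X ^ 4) ω.2) +
        X ^ 3 * (C 4 * subst2 (X ^ 2) (X ^ 3 + X ^ 4) ω.2) := by
    rw [pullback, dt_X_sq, dt_X_pow_add_X_pow]
    ring
  rw [e]
  interval_cases k <;>
    simp only [map_add, coeff_X_pow_mul', coeff_C_mul] <;>
    norm_num [coeff_subst2_branch₁, -coeff_zero_eq_constantCoeff]

theorem coeff_pullback_branch₂ (ω : MvPowerSeries (Fin 2) ℂ × MvPowerSeries (Fin 2) ℂ) {k : ℕ}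
    (hk : k ≤ 4) :
    coeff k (pullback (X ^ 2) (C b * X ^ 3) ω) =
      [0, 2 * coeffXY ω.1 0 0, 3 * b * coeffXY ω.2 0 0, 2 * coeffXY ω.1 1 0,
        b * (2 * coeffXY ω.1 0 1 + 3 * coeffXY ω.2 1 0)].getD k 0 := by
  have e : pullback (X ^ 2) (C b * X ^ 3) ω =
      X ^ 1 * (C 2 * subst2 (X ^ 2) (C b * X ^ 3) ω.1) +
        X ^ 2 * (C (3 * b) * subst2 (X ^ 2) (C b * X ^ 3) ω.2) := by
    rw [pullback, dt_X_sq, dt_C_mul_X_pow]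
    ring
  rw [e]
  interval_cases k <;>
    simp only [map_add, coeff_X_pow_mul', coeff_C_mul] <;>
    norm_num [coeff_subst2_branch₂, -coeff_zero_eq_constantCoeff]
  ring

theorem syncAt_pullback_of_lt_five (hb : b ≠ 0)
    (ω : MvPowerSeries (Fin 2) ℂ × MvPowerSeries (Fin 2) ℂ) {m : ℕ} (hm : m < 5) :
    SyncAt (pullback (X ^ 2) (X ^ 3 + X ^ 4) ω) (pullback (X ^ 2) (C b * X ^ 3) ω) m := by
  intro hlow
  have hB : m = 3 → coeffXY ω.2 0 0 = 0 := by
    rintro rfl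
    simpa [coeff_pullback_branch₁] using (hlow 2 (by norm_num)).1
  interval_cases m <;> simp [coeff_pullback_branch₁, coeff_pullback_branch₂, hb, hB]

/-- `3y dx - 2x dy`, which vanishes on every quasi-homogeneous branch `(t², b t³)`. -/
noncomputable def eulerForm : MvPowerSeries (Fin 2) ℂ × MvPowerSeries (Fin 2) ℂ :=
  (3 * 𝕪, -(2 * 𝕩))

noncomputable def eulerForm' : MvPowerSeries (Fin 2) ℂ × MvPowerSeries (Fin 2) ℂ :=
  eulerForm + (𝕩 ^ 2, 0)

noncomputable def dBranchEquation₁ : MvPowerSeries (Fin 2) ℂ × MvPowerSeries (Fin 2) ℂ :=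
  (-(3 * 𝕩 ^ 2) - 4 * 𝕩 * 𝕪 + 4 * 𝕩 ^ 3, 2 * 𝕪 - 2 * 𝕩 ^ 2)

noncomputable def dBranchEquation₂ (b : ℂ) : MvPowerSeries (Fin 2) ℂ × MvPowerSeries (Fin 2) ℂ :=
  (-(3 * b ^ 2) • 𝕩 ^ 2, 2 * 𝕪)

theorem pullback_eulerForm_branch₂ : pullback (X ^ 2) (C b * X ^ 3) eulerForm = 0 := by
  simp only [pullback, eulerForm, subst2_branch₂_eq, map_mul, map_ofNat, subst2Hom_X_one, dt_X_sq,
    map_neg, subst2Hom_X_zero, dt_C_mul_X_pow, neg_mul]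
  ring

theorem pullback_eulerForm'_branch₁ : pullback (X ^ 2) (X ^ 3 + X ^ 4) eulerForm' = 0 := by
  simp only [pullback, eulerForm', eulerForm, Prod.mk_add_mk, add_zero, subst2_branch₁_eq, map_add,
    map_mul, map_ofNat, subst2Hom_X_one, map_pow, subst2Hom_X_zero, dt_X_sq, map_neg,
    dt_X_pow_add_X_pow, neg_mul]
  ring

theorem order_pullback_eulerForm_branch₁ :
    (pullback (X ^ 2) (X ^ 3 + X ^ 4) eulerForm).order = (5 : ℕ) := by
  have e : pullback (X ^ 2) (X ^ 3 + X ^ 4) eulerForm = X ^ 5 * C (-2) := by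
    simp only [pullback, eulerForm, subst2_branch₁_eq, map_mul, map_ofNat, subst2Hom_X_one, dt_X_sq,
      map_neg, subst2Hom_X_zero, dt_X_pow_add_X_pow, neg_mul, mul_neg]
    ring
  rw [e]
  exact order_X_pow_mul_of_constantCoeff_ne_zero (by simp) 5

theorem order_pullback_eulerForm'_branch₂ :
    (pullback (X ^ 2) (C b * X ^ 3) eulerForm').order = (5 : ℕ) := by
  have e : pullback (X ^ 2) (C b * X ^ 3) eulerForm' = X ^ 5 * C 2 := by
    simp only [pullback, eulerForm', eulerForm, Prod.mk_add_mk, add_zero, subst2_branch₂_eq,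
      map_add, map_mul, map_ofNat, subst2Hom_X_one, map_pow, subst2Hom_X_zero, dt_X_sq, map_neg,
      dt_C_mul_X_pow, neg_mul]
    ring
  rw [e]
  exact order_X_pow_mul_of_constantCoeff_ne_zero (by simp) 5

theorem exists_pullback_branch₂_eq_zero (k : ℕ) :
    ∃ ω, pullback (X ^ 2) (C b * X ^ 3) ω = 0 ∧
      (pullback (X ^ 2) (X ^ 3 + X ^ 4) ω).order = (5 + k : ℕ) := by
  rcases eq_or_ne k 1 with rfl | hk
  · -- no monomial has value `1`; adding `3(1 - b²)` times `eulerForm` to `d f₂` cancels the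
    -- `t⁵` term of `d(f₂ ∘ φ₁)`
    refine ⟨dBranchEquation₂ b + (3 * (1 - b ^ 2)) • eulerForm, ?_, ?_⟩
    · simp only [pullback, dBranchEquation₂, neg_smul, eulerForm, Prod.smul_mk, smul_neg,
        Prod.mk_add_mk, subst2_branch₂_eq, map_add, map_neg, map_smul, map_pow, subst2Hom_X_zero,
        smul_eq_C_mul, map_mul, map_ofNat, subst2Hom_X_one, map_sub, map_one, dt_X_sq,
        dt_C_mul_X_pow]
      ring
    · have e : pullback (X ^ 2) (X ^ 3 + X ^ 4)
          (dBranchEquation₂ b + (3 * (1 - b ^ 2)) • eulerForm) = X ^ 6 * (C 14 + C 8 * X) := by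
        simp only [pullback, dBranchEquation₂, neg_smul, eulerForm, Prod.smul_mk, smul_neg,
          Prod.mk_add_mk, subst2_branch₁_eq, map_add, map_neg, map_smul, map_pow,
          subst2Hom_X_zero, smul_eq_C_mul, map_mul, map_ofNat, subst2Hom_X_one, map_sub, map_one,
          dt_X_sq, dt_X_pow_add_X_pow]
        ring
      rw [e]
      exact order_X_pow_mul_of_constantCoeff_ne_zero (by simp) 6
  · obtain ⟨i, j, rfl⟩ := exists_two_mul_add_three_mul hk
    refine ⟨(𝕩 ^ i * 𝕪 ^ j) • eulerForm, ?_, ?_⟩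
    · rw [pullback_smul (by simp) (by simp), pullback_eulerForm_branch₂, mul_zero]
    · rw [pullback_smul (by simp) (by simp), order_mul,
        order_subst2_monomial (by simp) (order_X_pow_add_X_pow_succ 3),
        order_pullback_eulerForm_branch₁]
      norm_cast
      omega

theorem exists_pullback_branch₁_eq_zero (hb : b ≠ 0) (l : ℕ) :
    ∃ ω, pullback (X ^ 2) (X ^ 3 + X ^ 4) ω = 0 ∧
      (pullback (X ^ 2) (C b * X ^ 3) ω).order = (5 + l : ℕ) := by
  rcases eq_or_ne l 1 with rfl | hl
  · refine ⟨dBranchEquation₁ + (3 * (1 - b ^ 2)) • eulerForm', ?_, ?_⟩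
    · simp only [pullback, dBranchEquation₁, eulerForm', eulerForm, Prod.mk_add_mk, add_zero,
        Prod.smul_mk, smul_add, smul_neg, subst2_branch₁_eq, map_add, map_sub, map_neg, map_mul,
        map_ofNat, map_pow, subst2Hom_X_zero, subst2Hom_X_one, map_smul, smul_eq_C_mul, map_one,
        dt_X_sq, dt_X_pow_add_X_pow]
      ring
    · have e : pullback (X ^ 2) (C b * X ^ 3) (dBranchEquation₁ + (3 * (1 - b ^ 2)) • eulerForm') =
          X ^ 6 * (C (-14 * b) + C 8 * X) := by
        simp only [pullback, dBranchEquation₁, eulerForm', eulerForm, Prod.mk_add_mk, add_zero,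
          Prod.smul_mk, smul_add, smul_neg, subst2_branch₂_eq, map_add, map_sub, map_neg, map_mul,
          map_ofNat, map_pow, subst2Hom_X_zero, subst2Hom_X_one, map_smul, smul_eq_C_mul, map_one,
          dt_X_sq, dt_C_mul_X_pow, neg_mul]
        ring
      rw [e]
      exact order_X_pow_mul_of_constantCoeff_ne_zero (by simpa using hb) 6
  · obtain ⟨i, j, rfl⟩ := exists_two_mul_add_three_mul hl
    refine ⟨(𝕩 ^ i * 𝕪 ^ j) • eulerForm', ?_, ?_⟩
    · rw [pullback_smul (by simp) (by simp), pullback_eulerForm'_branch₁, mul_zero]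
    · rw [pullback_smul (by simp) (by simp), order_mul,
        order_subst2_monomial (by simp) (order_C_mul_X_pow hb 3), order_pullback_eulerForm'_branch₂]
      norm_cast
      omega

theorem mem_lambdaTwo_of_X_pow (hb : b ≠ 0) (i : ℕ) :
    (2 * i + 2, 2 * i + 2) ∈ lambdaTwo (X ^ 2) (X ^ 3 + X ^ 4) (X ^ 2) (C b * X ^ 3) ∧
      (2 * i + 3, 2 * i + 3) ∈ lambdaTwo (X ^ 2) (X ^ 3 + X ^ 4) (X ^ 2) (C b * X ^ 3) := by
  constructor
  · refine mem_lambdaTwo_of_order (ω := (𝕩 ^ i, 0)) (n := 2 * i + 1) (m := 2 * i + 1) ?_ ?_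
    · rw [show pullback (X ^ 2) (X ^ 3 + X ^ 4) (𝕩 ^ i, 0) = X ^ (2 * i + 1) * C 2 by
        simp only [pullback, subst2_branch₁_eq, map_pow, subst2Hom_X_zero, dt_X_sq, map_zero,
          zero_mul, add_zero]; ring]
      exact order_X_pow_mul_of_constantCoeff_ne_zero (by simp) _
    · rw [show pullback (X ^ 2) (C b * X ^ 3) (𝕩 ^ i, 0) = X ^ (2 * i + 1) * C 2 by
        simp only [pullback, subst2_branch₂_eq, map_pow, subst2Hom_X_zero, dt_X_sq, map_zero,
          zero_mul, add_zero]; ring]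
      exact order_X_pow_mul_of_constantCoeff_ne_zero (by simp) _
  · refine mem_lambdaTwo_of_order (ω := (0, 𝕩 ^ i)) (n := 2 * i + 2) (m := 2 * i + 2) ?_ ?_
    · rw [show pullback (X ^ 2) (X ^ 3 + X ^ 4) (0, 𝕩 ^ i) = X ^ (2 * i + 2) * (C 3 + C 4 * X) by
        simp only [pullback, subst2_branch₁_eq, map_zero, zero_mul, map_pow, subst2Hom_X_zero,
          dt_X_pow_add_X_pow, zero_add]; ring]
      exact order_X_pow_mul_of_constantCoeff_ne_zero (by simp) _
    · rw [show pullback (X ^ 2) (C b * X ^ 3) (0, 𝕩 ^ i) = X ^ (2 * i + 2) * C (3 * b) by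
        simp only [pullback, subst2_branch₂_eq, map_zero, zero_mul, map_pow, subst2Hom_X_zero,
          dt_C_mul_X_pow, map_mul, zero_add]; ring]
      exact order_X_pow_mul_of_constantCoeff_ne_zero (by simpa using hb) _

theorem lambdaTwo_eq (hb : b ≠ 0) :
    lambdaTwo (X ^ 2) (X ^ 3 + X ^ 4) (X ^ 2) (C b * X ^ 3) =
      {p : ℕ × ℕ | p = (2, 2) ∨ p = (3, 3) ∨ p = (4, 4) ∨ p = (5, 5) ∨
        ∃ k l : ℕ, p = (6 + k, 6 + l)} := by
  ext p
  constructor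
  · intro hp
    obtain ⟨ω, e₁, e₂, he₁, he₂, rfl⟩ := exists_pullback_order_of_mem_lambdaTwo hp
    have he₁0 : 0 < e₁ :=
      (coeff_eq_zero_iff_lt_of_order_eq he₁ (Nat.zero_le _)).mp (by simp [coeff_pullback_branch₁])
    rcases order_eq_or_le_of_syncAt he₁ he₂ fun m hm => syncAt_pullback_of_lt_five hb ω hm with
      ⟨rfl, hlt⟩ | ⟨h₁, h₂⟩
    · interval_cases e₁ <;> simp
    · exact Or.inr (Or.inr (Or.inr (Or.inr ⟨e₁ - 5, e₂ - 5, by ext <;> simp <;> omega⟩)))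
  · rintro (rfl | rfl | rfl | rfl | ⟨k, l, rfl⟩)
    · exact (mem_lambdaTwo_of_X_pow hb 0).1
    · exact (mem_lambdaTwo_of_X_pow hb 0).2
    · exact (mem_lambdaTwo_of_X_pow hb 1).1
    · exact (mem_lambdaTwo_of_X_pow hb 1).2
    · obtain ⟨ω, hω₂, hω₁⟩ := exists_pullback_branch₂_eq_zero (b := b) k
      obtain ⟨ω', hω'₁, hω'₂⟩ := exists_pullback_branch₁_eq_zero hb l
      have := mem_lambdaTwo_of_add hω₁ (by rw [hω'₁, order_zero]; exact ENat.natCast_lt_top _) hω'₂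
        (by rw [hω₂, order_zero]; exact ENat.natCast_lt_top _)
      convert this using 2 <;> omega

end CurveD

/-- The value set of 1-forms does not determine the value semigroup for plane
curves with two branches: for the curve `D_b` with branches
`φ₁(t₁) = (t₁², t₁³ + t₁⁴)` and `φ₂(t₂) = (t₂², b·t₂³)` (`b ≠ 0`), the set
`Λ_{D_b}` is independent of `b`, while `Γ_{D_b}` takes two different values
according to whether `b² = 1` or not. -/
theorem two_branches_lambda_not_determine_gamma :
    (∀ b : ℂ, b ≠ 0 →
      lambdaTwo (PowerSeries.X ^ 2) (PowerSeries.X ^ 3 + PowerSeries.X ^ 4)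
          (PowerSeries.X ^ 2) (PowerSeries.C b * PowerSeries.X ^ 3)
        = {p : ℕ × ℕ | p = (2, 2) ∨ p = (3, 3) ∨ p = (4, 4) ∨ p = (5, 5) ∨
            ∃ k l : ℕ, p = (6 + k, 6 + l)}) ∧
    (∀ b : ℂ, b ≠ 0 → b ^ 2 ≠ 1 →
      gammaTwo (PowerSeries.X ^ 2) (PowerSeries.X ^ 3 + PowerSeries.X ^ 4)
          (PowerSeries.X ^ 2) (PowerSeries.C b * PowerSeries.X ^ 3)
        = {p : ℕ × ℕ | p = (0, 0) ∨ (∃ a : ℕ, 2 ≤ a ∧ a ≤ 7 ∧ p = (a, a)) ∨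
            (∃ k : ℕ, p = (6, 6 + k)) ∨ (∃ k : ℕ, p = (6 + k, 6)) ∨
            ∃ k l : ℕ, p = (8 + k, 8 + l)}) ∧
    (∀ b : ℂ, b ≠ 0 → b ^ 2 = 1 →
      gammaTwo (PowerSeries.X ^ 2) (PowerSeries.X ^ 3 + PowerSeries.X ^ 4)
          (PowerSeries.X ^ 2) (PowerSeries.C b * PowerSeries.X ^ 3)
        = {p : ℕ × ℕ | p = (0, 0) ∨ (∃ a : ℕ, 2 ≤ a ∧ a ≤ 8 ∧ p = (a, a)) ∨
            (∃ k : ℕ, p = (7, 7 + k)) ∨ (∃ k : ℕ, p = (7 + k, 7)) ∨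
            ∃ k l : ℕ, p = (9 + k, 9 + l)}) ∧
    ∃ b b' : ℂ, b ≠ 0 ∧ b' ≠ 0 ∧
      lambdaTwo (PowerSeries.X ^ 2) (PowerSeries.X ^ 3 + PowerSeries.X ^ 4)
          (PowerSeries.X ^ 2) (PowerSeries.C b * PowerSeries.X ^ 3)
        = lambdaTwo (PowerSeries.X ^ 2) (PowerSeries.X ^ 3 + PowerSeries.X ^ 4)
          (PowerSeries.X ^ 2) (PowerSeries.C b' * PowerSeries.X ^ 3) ∧
      gammaTwo (PowerSeries.X ^ 2) (PowerSeries.X ^ 3 + PowerSeries.X ^ 4)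
          (PowerSeries.X ^ 2) (PowerSeries.C b * PowerSeries.X ^ 3)
        ≠ gammaTwo (PowerSeries.X ^ 2) (PowerSeries.X ^ 3 + PowerSeries.X ^ 4)
          (PowerSeries.X ^ 2) (PowerSeries.C b' * PowerSeries.X ^ 3) := by
  refine ⟨fun b hb => CurveD.lambdaTwo_eq hb, fun b hb hb2 => ?_, fun b hb hb2 => ?_, ?_⟩
  · rw [CurveD.gammaTwo_eq hb, if_neg hb2]
    rfl
  · rw [CurveD.gammaTwo_eq hb, if_pos hb2]
    rfl
  refine ⟨2, 1, two_ne_zero, one_ne_zero, ?_, fun h => ?_⟩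
  · rw [CurveD.lambdaTwo_eq two_ne_zero, CurveD.lambdaTwo_eq one_ne_zero]
  rw [CurveD.gammaTwo_eq two_ne_zero, CurveD.gammaTwo_eq one_ne_zero, if_neg (by norm_num),
    if_pos (by norm_num)] at h
  have h67 : ((6, 7) : ℕ × ℕ) ∈ gammaSet 6 := mem_gammaSet_iff.mpr (by omega)
  rw [h, mem_gammaSet_iff] at h67
  omega
end
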